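/- arXiv:2105.11348 — 6 statements merged into one kernel-verified Lean document; each statement's English description precedes it below -/
import Mathlib

section
/- For every instance with a finite set M of indivisible goods and any number n ≥ 1 of agents with nonnegative additive valuations, there exists a PROPm allocation, i.e., a partition X = (X_1, ..., X_n) of M such that every agent i satisfies v_i(X_i) + d_i(X) ≥ v_i(M)/n. -/
open Finset

/-- The minimum value of a good in bundle `S` according to valuation `v`
(`0` if `S` is empty). -/
noncomputable def minVal {G : Type*} (v : G → ℝ) (S : Finset G) : ℝ :=
  if h : S.Nonempty then S.inf' h v else 0

/-- The maximin value `d_i(X) = max_{i' ≠ i} m_i(X_{i'})` of agent `i` in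
allocation `X` (`0` if there are no other agents). -/
noncomputable def dval {G : Type*} {n : ℕ}
    (v : Fin n → G → ℝ) (X : Fin n → Finset G) (i : Fin n) : ℝ :=
  (Finset.univ.erase i).fold max 0 (fun i' => minVal (v i) (X i'))

section Helpers

variable {α : Type*} {G : Type*}

lemma fold_max_nonneg (s : Finset α) (f : α → ℝ) : 0 ≤ s.fold max 0 f :=
  (Finset.le_fold_max _).2 (Or.inl le_rfl)

lemma le_fold_max' (s : Finset α) (f : α → ℝ) {a : α} (ha : a ∈ s) :
    f a ≤ s.fold max 0 f :=
  (Finset.le_fold_max _).2 (Or.inr ⟨a, ha, le_rfl⟩)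

lemma fold_max_mono {s t : Finset α} (hst : s ⊆ t) (f : α → ℝ) :
    s.fold max 0 f ≤ t.fold max 0 f := by
  rw [Finset.fold_max_le]
  exact ⟨fold_max_nonneg t f, fun x hx => le_fold_max' t f (hst hx)⟩

lemma fold_max_congr {s : Finset α} {f g : α → ℝ} (h : ∀ a ∈ s, f a = g a) :
    s.fold max 0 f = s.fold max 0 g :=
  Finset.fold_congr h

lemma minVal_nonneg (v : G → ℝ) (hv : ∀ j, 0 ≤ v j) (S : Finset G) :
    0 ≤ minVal v S := by
  unfold minVal
  split
  · exact Finset.le_inf' _ _ fun j _ => hv j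
  · exact le_rfl

lemma minVal_exists (v : G → ℝ) {S : Finset G} (hS : S.Nonempty) :
    ∃ g ∈ S, minVal v S = v g := by
  unfold minVal
  rw [dif_pos hS]
  exact Finset.exists_mem_eq_inf' hS v

/-- There is a least cardinality `p` such that some subset of `R` of size at most `p`
has total value at least `D`. -/
lemma exists_witness [DecidableEq G] (v : G → ℝ) (R : Finset G) (D : ℝ)
    (hR : D ≤ ∑ j ∈ R, v j) :
    ∃ p : ℕ, (∃ P : Finset G, P ⊆ R ∧ P.card ≤ p ∧ D ≤ ∑ j ∈ P, v j) ∧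
      ∀ S : Finset G, S ⊆ R → S.card < p → ∑ j ∈ S, v j < D := by
  classical
  have hQ : ∃ q : ℕ, ∃ P : Finset G, P ⊆ R ∧ P.card ≤ q ∧ D ≤ ∑ j ∈ P, v j :=
    ⟨R.card, R, Finset.Subset.refl R, le_rfl, hR⟩
  refine ⟨Nat.find hQ, Nat.find_spec hQ, ?_⟩
  intro S hSR hScard
  by_contra hcon
  push_neg at hcon
  exact Nat.find_min hQ hScard ⟨S, hSR, le_rfl, hcon⟩

/-- Key combinatorial bound: if every subset of `R` of cardinality less than `p` has value
less than `D`, then any nonempty subset `P` of `R` of cardinality at most `p` has value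
less than `D` plus the minimum value of `P`. -/
lemma loser_bound [DecidableEq G] (v : G → ℝ) (R P : Finset G)
    (hPR : P ⊆ R) (hP : P.Nonempty) (D : ℝ) (p : ℕ) (hcard : P.card ≤ p)
    (hmin : ∀ S : Finset G, S ⊆ R → S.card < p → ∑ j ∈ S, v j < D) :
    ∑ j ∈ P, v j < D + minVal v P := by
  obtain ⟨g, hg, hmv⟩ := minVal_exists v hP
  have hc1 : 1 ≤ P.card := Finset.card_pos.2 hP
  have herase : (P.erase g).card < p := by
    rw [Finset.card_erase_of_mem hg]; omega
  have h1 : ∑ j ∈ P.erase g, v j < D :=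
    hmin _ ((Finset.erase_subset _ _).trans hPR) herase
  have h2 : ∑ j ∈ P.erase g, v j + v g = ∑ j ∈ P, v j :=
    Finset.sum_erase_add _ _ hg
  rw [hmv]
  linarith

variable [DecidableEq G]

/-- The main recursive lemma: given a set `N` of agents, a set `R` of remaining goods,
and per-agent fallback values `f i` (the minimum value, to agent `i`, of some bundle
already allocated to another agent), if the invariant
`τ i ≤ f i ∨ (|N| - 1) * τ i + (τ i - f i) ≤ v i (R)` holds for every agent in `N`,
then `R` can be partitioned among `N` so that every `i ∈ N` gets value at least
`τ i - max (f i) (maximin over other bundles)`. -/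
lemma main_lemma {n : ℕ} (v : Fin n → G → ℝ) (hv : ∀ i j, 0 ≤ v i j)
    (τ : Fin n → ℝ) (hτ : ∀ i, 0 ≤ τ i) :
    ∀ (k : ℕ) (N : Finset (Fin n)) (R : Finset G) (f : Fin n → ℝ),
      N.card ≤ k → N.Nonempty → (∀ i, 0 ≤ f i) →
      (∀ i ∈ N, τ i ≤ f i ∨ ((N.card : ℝ) - 1) * τ i + (τ i - f i) ≤ ∑ j ∈ R, v i j) →
      ∃ X : Fin n → Finset G,
        (∀ i, i ∉ N → X i = ∅) ∧
        (∀ i i', i ≠ i' → Disjoint (X i) (X i')) ∧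
        N.biUnion X = R ∧
        ∀ i ∈ N, τ i ≤ (∑ j ∈ X i, v i j) +
          max (f i) ((N.erase i).fold max 0 fun i' => minVal (v i) (X i')) := by
  intro k
  induction k with
  | zero =>
    intro N R f hk hN hf hinv
    have := Finset.card_pos.2 hN
    omega
  | succ k ih =>
    intro N R f hk hN hf hinv
    by_cases hone : N.card ≤ 1
    · -- base case : a single agent, who receives everything
      have hcard : N.card = 1 := le_antisymm hone (Finset.card_pos.2 hN)
      obtain ⟨i₀, rfl⟩ := Finset.card_eq_one.1 hcard
      refine ⟨fun i => if i = i₀ then R else ∅, ?_, ?_, ?_, ?_⟩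
      · intro i hi
        dsimp only
        rw [if_neg (fun h => hi (by rw [h]; exact Finset.mem_singleton_self i₀))]
      · intro i i' hne
        dsimp only
        rcases eq_or_ne i i₀ with rfl | hi
        · rw [if_neg (Ne.symm hne)]; simp
        · rw [if_neg hi]; simp
      · simp
      · intro i hi
        rw [Finset.mem_singleton] at hi
        subst hi
        dsimp only
        rw [if_pos rfl]
        have hsum : (0:ℝ) ≤ ∑ j ∈ R, v i j := Finset.sum_nonneg fun j _ => hv i j
        have hmax : f i ≤ max (f i) ((({i} : Finset (Fin n)).erase i).fold max 0
            fun i' => minVal (v i) (if i' = i then R else ∅)) := le_max_left _ _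
        rcases hinv i (Finset.mem_singleton_self i) with h | h
        · linarith
        · rw [Finset.card_singleton] at h
          push_cast at h
          linarith
    · push_neg at hone
      by_cases hA : ∃ i₀ ∈ N, τ i₀ ≤ f i₀
      · -- an agent whose fallback already covers her share: she gets the empty bundle
        obtain ⟨i₀, hi₀N, hi₀⟩ := hA
        have hcard' : (N.erase i₀).card = N.card - 1 := Finset.card_erase_of_mem hi₀N
        have hN' : (N.erase i₀).Nonempty := by
          rw [← Finset.card_pos, hcard']; omega
        have hcast : ((N.erase i₀).card : ℝ) = (N.card : ℝ) - 1 := by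
          rw [hcard', Nat.cast_sub (by omega)]; norm_num
        obtain ⟨X, hXout, hXdis, hXun, hXg⟩ :=
          ih (N.erase i₀) R f (by omega) hN' hf (by
            intro i hi
            rcases hinv i (Finset.mem_of_mem_erase hi) with h | h
            · exact Or.inl h
            · right
              rw [hcast]
              nlinarith [hτ i])
        refine ⟨X, ?_, hXdis, ?_, ?_⟩
        · intro i hi
          exact hXout i fun hmem => hi (Finset.mem_of_mem_erase hmem)
        · have hX₀ : X i₀ = ∅ := hXout i₀ (Finset.notMem_erase _ _)
          conv_lhs => rw [← Finset.insert_erase hi₀N]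
          rw [Finset.biUnion_insert, hX₀, Finset.empty_union, hXun]
        · intro i hi
          rcases eq_or_ne i i₀ with rfl | hne
          · have hX₀ : X i = ∅ := hXout i (Finset.notMem_erase _ _)
            rw [hX₀]
            simp only [Finset.sum_empty]
            calc τ i ≤ f i := hi₀
              _ ≤ max (f i) _ := le_max_left _ _
              _ = 0 + max (f i) _ := (zero_add _).symm
          · have hi' : i ∈ N.erase i₀ := Finset.mem_erase.2 ⟨hne, hi⟩
            have hsub : (N.erase i₀).erase i ⊆ N.erase i :=
              Finset.erase_subset_erase _ (Finset.erase_subset _ _)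
            have hfold := fold_max_mono hsub (fun i' => minVal (v i) (X i'))
            have := hXg i hi'
            have hmax : max (f i) (((N.erase i₀).erase i).fold max 0
                  fun i' => minVal (v i) (X i')) ≤
                max (f i) ((N.erase i).fold max 0 fun i' => minVal (v i) (X i')) :=
              max_le_max le_rfl hfold
            linarith
      · -- every agent still has a positive deficit
        push_neg at hA
        have hinv' : ∀ i ∈ N, ((N.card : ℝ) - 1) * τ i + (τ i - f i) ≤ ∑ j ∈ R, v i j :=
          fun i hi => (hinv i hi).resolve_left (not_le.2 (hA i hi))
        have hcN : (1:ℝ) ≤ (N.card : ℝ) := by exact_mod_cast Nat.one_le_iff_ne_zero.2 (by omega)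
        have hw0 : ∀ i ∈ N, τ i - f i ≤ ∑ j ∈ R, v i j := by
          intro i hi
          have := hinv' i hi
          nlinarith [hτ i]
        -- minimal witness cardinalities
        have hex : ∀ i : Fin n, ∃ p : ℕ, i ∈ N →
            ((∃ P : Finset G, P ⊆ R ∧ P.card ≤ p ∧ τ i - f i ≤ ∑ j ∈ P, v i j) ∧
              ∀ S : Finset G, S ⊆ R → S.card < p → ∑ j ∈ S, v i j < τ i - f i) := by
          intro i
          by_cases hi : i ∈ N
          · obtain ⟨p, h1, h2⟩ := exists_witness (v i) R (τ i - f i) (hw0 i hi)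
            exact ⟨p, fun _ => ⟨h1, h2⟩⟩
          · exact ⟨0, fun h => absurd h hi⟩
        choose p hp using hex
        obtain ⟨w, hwN, hwmin⟩ := Finset.exists_min_image N p hN
        obtain ⟨P, hPR, hPcard, hPval⟩ := (hp w hwN).1
        have hPne : P.Nonempty := by
          rcases P.eq_empty_or_nonempty with rfl | h
          · rw [Finset.sum_empty] at hPval
            linarith [hA w hwN]
          · exact h
        set N' := N.erase w with hN'def
        set R' := R \ P with hR'def
        set f' := fun i => max (f i) (minVal (v i) P) with hf'def
        have hcard' : N'.card = N.card - 1 := Finset.card_erase_of_mem hwN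
        have hN'ne : N'.Nonempty := by rw [← Finset.card_pos, hcard']; omega
        have hcast : (N'.card : ℝ) = (N.card : ℝ) - 1 := by
          rw [hcard', Nat.cast_sub (by omega)]; norm_num
        have hf' : ∀ i, 0 ≤ f' i := fun i => le_trans (hf i) (le_max_left _ _)
        have hsplit : ∀ i, ∑ j ∈ R', v i j = ∑ j ∈ R, v i j - ∑ j ∈ P, v i j := by
          intro i
          rw [hR'def, eq_sub_iff_add_eq]
          exact Finset.sum_sdiff hPR
        have hinvN' : ∀ i ∈ N', τ i ≤ f' i ∨
            ((N'.card : ℝ) - 1) * τ i + (τ i - f' i) ≤ ∑ j ∈ R', v i j := by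
          intro i hi
          by_cases hc : τ i ≤ f' i
          · exact Or.inl hc
          · right
            push_neg at hc
            have hiN : i ∈ N := Finset.mem_of_mem_erase hi
            have hlb : ∑ j ∈ P, v i j < (τ i - f i) + minVal (v i) P :=
              loser_bound (v i) R P hPR hPne _ (p i)
                (hPcard.trans (hwmin i hiN)) (hp i hiN).2
            have hm : minVal (v i) P ≤ f' i := le_max_right _ _
            have hR0 := hinv' i hiN
            rw [hcast, hsplit i]
            nlinarith
        obtain ⟨X', hXout', hXdis', hXun', hXg'⟩ :=
          ih N' R' f' (by omega) hN'ne hf' hinvN'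
        refine ⟨fun i => if i = w then P else X' i, ?_, ?_, ?_, ?_⟩
        · intro i hi
          dsimp only
          rw [if_neg (fun h => hi (by rw [h]; exact hwN))]
          exact hXout' i fun hmem => hi (Finset.mem_of_mem_erase hmem)
        · have hsubR' : ∀ i', X' i' ⊆ R' := by
            intro i'
            by_cases hi' : i' ∈ N'
            · rw [← hXun']
              exact Finset.subset_biUnion_of_mem X' hi'
            · rw [hXout' i' hi']
              exact Finset.empty_subset _
          have hdisP : ∀ i', Disjoint P (X' i') := fun i' =>
            Finset.disjoint_of_subset_right (hsubR' i') Finset.sdiff_disjoint.symm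
          intro i i' hne
          dsimp only
          rcases eq_or_ne i w with rfl | hi
          · rw [if_pos rfl, if_neg (Ne.symm hne)]
            exact hdisP i'
          · rw [if_neg hi]
            rcases eq_or_ne i' w with rfl | hi'
            · rw [if_pos rfl]
              exact (hdisP i).symm
            · rw [if_neg hi']
              exact hXdis' i i' hne
        · conv_lhs => rw [← Finset.insert_erase hwN]
          rw [Finset.biUnion_insert, if_pos rfl]
          have : (N.erase w).biUnion (fun i => if i = w then P else X' i) =
              (N.erase w).biUnion X' := by
            refine Finset.biUnion_congr rfl ?_
            intro i hi
            rw [if_neg (Finset.ne_of_mem_erase hi)]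
          rw [this]
          rw [← hN'def, hXun', hR'def]
          exact Finset.union_sdiff_of_subset hPR
        · intro i hi
          dsimp only
          rcases eq_or_ne i w with rfl | hne
          · rw [if_pos rfl]
            have : f i ≤ max (f i) ((N.erase i).fold max 0
                fun i' => minVal (v i) (if i' = i then P else X' i')) := le_max_left _ _
            linarith
          · have hi' : i ∈ N' := Finset.mem_erase.2 ⟨hne, hi⟩
            have hguar := hXg' i hi'
            rw [if_neg hne]
            -- the full max dominates the recursive max
            have hwmem : w ∈ N.erase i := Finset.mem_erase.2 ⟨Ne.symm hne, hwN⟩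
            have hterm : minVal (v i) P ≤ (N.erase i).fold max 0
                (fun i' => minVal (v i) (if i' = w then P else X' i')) := by
              have := le_fold_max' (N.erase i)
                (fun i' => minVal (v i) (if i' = w then P else X' i')) hwmem
              simpa using this
            have hfle : f i ≤ (max (f i) ((N.erase i).fold max 0
                fun i' => minVal (v i) (if i' = w then P else X' i'))) := le_max_left _ _
            have hf'le : f' i ≤ max (f i) ((N.erase i).fold max 0
                fun i' => minVal (v i) (if i' = w then P else X' i')) :=
              max_le hfle (le_trans hterm (le_max_right _ _))
            have hfoldeq : (N'.erase i).fold max 0 (fun i' => minVal (v i) (X' i')) =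
                (N'.erase i).fold max 0
                  (fun i' => minVal (v i) (if i' = w then P else X' i')) := by
              refine fold_max_congr ?_
              intro a ha
              have haw : a ≠ w := Finset.ne_of_mem_erase (Finset.mem_of_mem_erase ha)
              rw [if_neg haw]
            have hsub : N'.erase i ⊆ N.erase i :=
              Finset.erase_subset_erase _ (Finset.erase_subset _ _)
            have hfoldle : (N'.erase i).fold max 0 (fun i' => minVal (v i) (X' i')) ≤
                (N.erase i).fold max 0
                  (fun i' => minVal (v i) (if i' = w then P else X' i')) := by
              rw [hfoldeq]
              exact fold_max_mono hsub _
            have hmaxle : max (f' i) ((N'.erase i).fold max 0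
                  (fun i' => minVal (v i) (X' i'))) ≤
                max (f i) ((N.erase i).fold max 0
                  fun i' => minVal (v i) (if i' = w then P else X' i')) :=
              max_le hf'le (le_trans hfoldle (le_max_right _ _))
            linarith

end Helpers

/-- For every instance with a finite set of goods and `n ≥ 1` agents with
nonnegative additive valuations, there exists a PROPm allocation. -/
theorem propm_exists (n : ℕ) (hn : 1 ≤ n)
    (G : Type*) [Fintype G] [DecidableEq G]
    (v : Fin n → G → ℝ) (hv : ∀ i j, 0 ≤ v i j) :
    ∃ X : Fin n → Finset G,
      (∀ i i', i ≠ i' → Disjoint (X i) (X i')) ∧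
      Finset.univ.biUnion X = Finset.univ ∧
      ∀ i, (∑ j ∈ X i, v i j) + dval v X i ≥ (∑ j, v i j) / n := by
  have hnpos : (0:ℝ) < (n:ℝ) := by exact_mod_cast hn
  set τ : Fin n → ℝ := fun i => (∑ j, v i j) / n with hτdef
  have hτ : ∀ i, 0 ≤ τ i := fun i =>
    div_nonneg (Finset.sum_nonneg fun j _ => hv i j) (le_of_lt hnpos)
  have : Nonempty (Fin n) := ⟨⟨0, hn⟩⟩
  have hNne : (Finset.univ : Finset (Fin n)).Nonempty := Finset.univ_nonempty
  have hcard : (Finset.univ : Finset (Fin n)).card = n := by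
    simp [Finset.card_univ]
  obtain ⟨X, hXout, hXdis, hXun, hXg⟩ :=
    main_lemma v hv τ hτ n Finset.univ Finset.univ (fun _ => 0)
      (by rw [hcard]) hNne (fun _ => le_rfl) (by
        intro i _
        right
        rw [hcard]
        have : ((n:ℝ) - 1) * τ i + (τ i - 0) = (n:ℝ) * τ i := by ring
        rw [this, hτdef]
        rw [mul_div_cancel₀ _ (ne_of_gt hnpos)])
  refine ⟨X, hXdis, hXun, ?_⟩
  intro i
  have hg := hXg i (Finset.mem_univ i)
  have hd : dval v X i = (Finset.univ.erase i).fold max 0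
      (fun i' => minVal (v i) (X i')) := rfl
  have hnn : 0 ≤ (Finset.univ.erase i).fold max 0
      (fun i' => minVal (v i) (X i')) := fold_max_nonneg _ _
  simp only [hτdef] at hg
  rw [max_eq_right hnn] at hg
  rw [ge_iff_le, hd]
  exact hg
end

section
/- Let n ≥ 2, let i be an agent and j* a good with v_{ij*} ≥ v_i(M)/n. Suppose X' is an allocation of the goods M \ {j*} to the agents N \ {i} such that every agent k ≠ i satisfies v_k(X'_k) + d_k(X') ≥ v_k(M \ {j*})/(n−1) (PROPm for the reduced instance with n−1 agents). Then the allocation X of M to N defined by X_i = {j*} and X_k = X'_k for k ≠ i is a PROPm allocation of the original instance: every agent k (including i) satisfies v_k(X_k) + d_k(X) ≥ v_k(M)/n. -/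
open Finset

/-- The maximin value of agent `k` computed only over the bundles of the other
agents in the agent set `N'`. -/
noncomputable def dvalOn {G : Type*} {n : ℕ}
    (v : Fin n → G → ℝ) (X : Fin n → Finset G) (N' : Finset (Fin n)) (k : Fin n) : ℝ :=
  (N'.erase k).fold max 0 (fun i' => minVal (v k) (X i'))

/-- If agent `i` values good `j*` at least `v_i(M)/n`, then extending a PROPm
allocation of `M \ {j*}` to the agents `N \ {i}` by giving `{j*}` to `i` yields
a PROPm allocation of the original instance. -/
theorem propm_reduction (n : ℕ) (hn : 2 ≤ n)
    (G : Type*) [Fintype G] [DecidableEq G]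
    (v : Fin n → G → ℝ) (hv : ∀ i j, 0 ≤ v i j)
    (i : Fin n) (jstar : G)
    (hij : v i jstar ≥ (∑ j, v i j) / n)
    (X' : Fin n → Finset G)
    (hX'i : X' i = ∅)
    (hdisj : ∀ k k', k ≠ k' → Disjoint (X' k) (X' k'))
    (hcover : (Finset.univ.erase i).biUnion X' = Finset.univ.erase jstar)
    (hred : ∀ k, k ≠ i →
      (∑ j ∈ X' k, v k j) + dvalOn v X' (Finset.univ.erase i) k ≥
        (∑ j ∈ Finset.univ.erase jstar, v k j) / ((n : ℝ) - 1)) :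
    ∀ k, (∑ j ∈ (if k = i then {jstar} else X' k), v k j) +
        dval v (fun k' => if k' = i then {jstar} else X' k') k ≥ (∑ j, v k j) / n := by

  intro k
  have hDnn : (0:ℝ) ≤ dval v (fun k' => if k' = i then {jstar} else X' k') k := by
    unfold dval
    exact (Finset.le_fold_max 0).mpr (Or.inl le_rfl)
  by_cases hk : k = i
  · subst hk
    rw [if_pos rfl, Finset.sum_singleton]
    linarith
  · simp only [if_neg hk]
    set D := dval v (fun k' => if k' = i then {jstar} else X' k') k with hD
    have htD : v k jstar ≤ D := by
      rw [hD]; unfold dval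
      refine (Finset.le_fold_max _).mpr (Or.inr ⟨i, ?_, ?_⟩)
      · simp [Ne.symm hk]
      · simp only [if_pos rfl]
        unfold minVal
        rw [dif_pos ⟨jstar, Finset.mem_singleton_self jstar⟩]
        simp
    have hD'D : dvalOn v X' (Finset.univ.erase i) k ≤ D := by
      rw [hD]; unfold dval dvalOn
      refine (Finset.fold_max_le _).mpr ⟨(Finset.le_fold_max 0).mpr (Or.inl le_rfl), ?_⟩
      intro x hx
      have hxk : x ≠ k := Finset.ne_of_mem_erase hx
      have hxi : x ≠ i := Finset.ne_of_mem_erase (Finset.mem_of_mem_erase hx)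
      refine (Finset.le_fold_max _).mpr (Or.inr ⟨x, by simp [hxk], ?_⟩)
      simp only [if_neg hxi]; exact le_rfl
    have hred' := hred k hk
    have hsum : ∑ j ∈ Finset.univ.erase jstar, v k j = (∑ j, v k j) - v k jstar := by
      have := Finset.sum_erase_add Finset.univ (v k) (Finset.mem_univ jstar)
      linarith
    rw [hsum] at hred'
    have hn1 : (2:ℝ) ≤ (n:ℝ) := by exact_mod_cast hn
    have hn0 : (0:ℝ) < n := by linarith
    have hA : 0 ≤ ∑ j ∈ X' k, v k j := Finset.sum_nonneg fun j _ => hv k j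
    by_cases ht : v k jstar ≥ (∑ j, v k j) / n
    · linarith
    · push_neg at ht
      have ht' : v k jstar * n < ∑ j, v k j := (lt_div_iff₀ hn0).mp ht
      have key : (∑ j, v k j) / n ≤ ((∑ j, v k j) - v k jstar) / ((n:ℝ) - 1) := by
        rw [div_le_div_iff₀ hn0 (by linarith)]
        nlinarith
      linarith
end

section
/- (Proportionality preserved by shifting agents along a path.) Fix n agents with valuations normalized so v_i(M) = 1. Let (A_1, N_1), ..., (A_p, N_p) be pairwise agent-disjoint and bundle-disjoint proportional sub-problems. Let k_0 be an agent not in any N_j with v_{k_0}(A_1) ≥ |N_1|/n, and for each j ∈ {1, ..., p−1} let k_j ∈ N_j be an agent with v_{k_j}(A_{j+1}) ≥ |N_{j+1}|/n, and let k_p ∈ N_p. Then the modified sub-problems (A_1, (N_1 \ {k_1}) ∪ {k_0}), (A_2, (N_2 \ {k_2}) ∪ {k_1}), ..., (A_p, (N_p \ {k_p}) ∪ {k_{p−1}}) are all proportional. -/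
open Finset

/-- The value of an agent with valuation `v` for a collection `A` of bundles:
`v(A) = ∑_{S ∈ A} v(S)`. -/
noncomputable def colVal {G : Type*} [DecidableEq G] (v : G → ℝ) (A : Finset (Finset G)) : ℝ :=
  ∑ S ∈ A, ∑ j ∈ S, v j

/-- Proportionality is preserved by shifting agents along a path of
sub-problems.  Sub-problems are `0`-indexed here: `(A j, Ns j)` for `j < p`
corresponds to `(A_{j+1}, N_{j+1})` of the informal statement, and the agents
are `k 0, k 1, ..., k p`. -/
theorem shift_path_preserves_proportionality (n : ℕ)
    (G : Type*) [Fintype G] [DecidableEq G]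
    (v : Fin n → G → ℝ) (hv : ∀ i j, 0 ≤ v i j)
    (hnorm : ∀ i, ∑ j, v i j = 1)
    (p : ℕ) (hp : 1 ≤ p)
    (A : ℕ → Finset (Finset G)) (Ns : ℕ → Finset (Fin n)) (k : ℕ → Fin n)
    -- the sub-problems are pairwise agent-disjoint and bundle-disjoint
    (hagdisj : ∀ j < p, ∀ j' < p, j ≠ j' → Disjoint (Ns j) (Ns j'))
    (hbundisj : ∀ j < p, ∀ j' < p, j ≠ j' → Disjoint (A j) (A j'))
    -- within each sub-problem the bundles are pairwise disjoint sets of goods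
    (hinner : ∀ j < p, ∀ S ∈ A j, ∀ S' ∈ A j, S ≠ S' → Disjoint S S')
    -- each sub-problem is proportional
    (hprop : ∀ j < p, ∀ q ∈ Ns j, colVal (v q) (A j) / (Ns j).card ≥ 1 / n)
    -- agent `k 0` is in no sub-problem and values the first one enough
    (hk0 : ∀ j < p, k 0 ∉ Ns j)
    (hk0val : colVal (v (k 0)) (A 0) ≥ (Ns 0).card / n)
    -- for `1 ≤ j ≤ p`, agent `k j` belongs to the `j`-th sub-problem
    (hkmem : ∀ j < p, k (j + 1) ∈ Ns j)
    -- and, for `1 ≤ j ≤ p - 1`, values the next sub-problem enough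
    (hkval : ∀ j, j + 1 < p →
      colVal (v (k (j + 1))) (A (j + 1)) ≥ (Ns (j + 1)).card / n) :
    -- the modified sub-problems `(A j, (Ns j \ {k (j+1)}) ∪ {k j})` are proportional
    ∀ j < p, ∀ q ∈ insert (k j) ((Ns j).erase (k (j + 1))),
      colVal (v q) (A j) / (insert (k j) ((Ns j).erase (k (j + 1)))).card ≥ 1 / n := by
  intro j hj q hq
  have hn : 0 < n := (k 0).pos
  have hmem : k (j + 1) ∈ Ns j := hkmem j hj
  have hcard_pos : 0 < (Ns j).card := Finset.card_pos.mpr ⟨_, hmem⟩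
  have hkj_notin : k j ∉ (Ns j).erase (k (j + 1)) := by
    intro h
    have hmem' : k j ∈ Ns j := Finset.mem_of_mem_erase h
    cases j with
    | zero => exact hk0 0 hj hmem'
    | succ m =>
      have hm : m < p := by omega
      have := hagdisj m hm (m + 1) hj (by omega)
      exact (Finset.disjoint_left.mp this (hkmem m hm)) hmem'
  have hcard : (insert (k j) ((Ns j).erase (k (j + 1)))).card = (Ns j).card := by
    rw [Finset.card_insert_of_notMem hkj_notin, Finset.card_erase_of_mem hmem]
    omega
  rw [hcard]
  rcases Finset.mem_insert.mp hq with hq | hq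
  · rw [hq]
    have hval : colVal (v (k j)) (A j) ≥ (Ns j).card / n := by
      cases j with
      | zero => exact hk0val
      | succ m => exact hkval m hj
    rw [ge_iff_le, le_div_iff₀ (by positivity)]
    calc (1 : ℝ) / n * (Ns j).card = (Ns j).card / n := by ring
      _ ≤ colVal (v (k j)) (A j) := hval
  · exact hprop j hj q (Finset.mem_of_mem_erase hq)
end

section
/- (The divider is PROPm-satisfied.) Let agent i have valuation normalized so v_i(M) = 1, and let S_1, ..., S_n be a partition of M into n bundles such that for every k ∈ {1, ..., n}: (a) v_i(S_k) ≤ (1/(n+1−k)) · v_i(M \ (S_1 ∪ ... ∪ S_{k−1})), and (b) for every good j ∈ M \ (S_1 ∪ ... ∪ S_k), v_i(S_k) + v_{ij} > (1/(n+1−k)) · v_i(M \ (S_1 ∪ ... ∪ S_{k−1})). Let X be an allocation of M to the n agents in which agent i receives X_i = S_ℓ for some ℓ, and no bundle X_{i'} with i' ≠ i contains both a good from S_1 ∪ ... ∪ S_{ℓ−1} and a good from S_{ℓ+1} ∪ ... ∪ S_n. Then agent i is PROPm-satisfied by X: v_i(X_i) + d_i(X) ≥ 1/n. -/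
open Finset

/-- The divider is PROPm-satisfied: if the divider `i` receives its bundle
`S ℓ` and no other agent's bundle mixes goods from `S 1, ..., S (ℓ-1)` with
goods from `S (ℓ+1), ..., S n`, then `i` is PROPm-satisfied.  The bundles of
the divider's partition are `S 1, ..., S n` (1-indexed). -/
theorem divider_propm_satisfied (n : ℕ)
    (G : Type*) [Fintype G] [DecidableEq G]
    (v : Fin n → G → ℝ) (i : Fin n)
    (hv : ∀ j, 0 ≤ v i j) (hnorm : ∑ j, v i j = 1)
    (S : ℕ → Finset G)
    -- `S 1, ..., S n` is a partition of the goods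
    (hSdisj : ∀ b ∈ Finset.Icc 1 n, ∀ b' ∈ Finset.Icc 1 n, b ≠ b' →
      Disjoint (S b) (S b'))
    (hScover : (Finset.Icc 1 n).biUnion S = Finset.univ)
    -- condition (a)
    (hA : ∀ k ∈ Finset.Icc 1 n,
      (∑ g ∈ S k, v i g) ≤
        (1 / ((n : ℝ) + 1 - k)) *
          ∑ g ∈ Finset.univ \ (Finset.Icc 1 (k - 1)).biUnion S, v i g)
    -- condition (b)
    (hB : ∀ k ∈ Finset.Icc 1 n, ∀ j ∈ Finset.univ \ (Finset.Icc 1 k).biUnion S,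
      (∑ g ∈ S k, v i g) + v i j >
        (1 / ((n : ℝ) + 1 - k)) *
          ∑ g ∈ Finset.univ \ (Finset.Icc 1 (k - 1)).biUnion S, v i g)
    -- `X` is an allocation in which the divider receives `S ℓ`
    (X : Fin n → Finset G)
    (hXdisj : ∀ k k', k ≠ k' → Disjoint (X k) (X k'))
    (hXcover : Finset.univ.biUnion X = Finset.univ)
    (ℓ : ℕ) (hℓ : ℓ ∈ Finset.Icc 1 n) (hXi : X i = S ℓ)
    -- no other bundle contains a good from `S 1 ∪ ⋯ ∪ S (ℓ-1)` together with
    -- a good from `S (ℓ+1) ∪ ⋯ ∪ S n`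
    (hnomix : ∀ i', i' ≠ i →
      ¬((X i' ∩ (Finset.Icc 1 (ℓ - 1)).biUnion S).Nonempty ∧
        (X i' ∩ (Finset.Icc (ℓ + 1) n).biUnion S).Nonempty)) :
    (∑ g ∈ X i, v i g) + dval v X i ≥ 1 / n := by

  have hℓ1 : 1 ≤ ℓ := (Finset.mem_Icc.mp hℓ).1
  have hℓn : ℓ ≤ n := (Finset.mem_Icc.mp hℓ).2
  have hn : 1 ≤ n := le_trans hℓ1 hℓn
  have hnR : (0:ℝ) < n := by exact_mod_cast hn
  have hd0 : 0 ≤ dval v X i := by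
    unfold dval
    exact (Finset.le_fold_max _).mpr (Or.inl le_rfl)
  -- splitting off S k from the remaining goods
  have hsub : ∀ k, 1 ≤ k → k ≤ n →
      (∑ g ∈ Finset.univ \ (Finset.Icc 1 k).biUnion S, v i g)
        = (∑ g ∈ Finset.univ \ (Finset.Icc 1 (k-1)).biUnion S, v i g)
          - ∑ g ∈ S k, v i g := by
    intro k hk1 hkn
    have hicc : Finset.Icc 1 k = insert k (Finset.Icc 1 (k-1)) := by
      ext x; simp only [Finset.mem_Icc, Finset.mem_insert]; omega
    have hSsub : S k ⊆ Finset.univ \ (Finset.Icc 1 (k-1)).biUnion S := by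
      intro j hj
      rw [Finset.mem_sdiff]
      refine ⟨Finset.mem_univ j, ?_⟩
      intro hmem
      obtain ⟨b, hb, hjb⟩ := Finset.mem_biUnion.mp hmem
      have hb' : b ∈ Finset.Icc 1 n := by
        simp only [Finset.mem_Icc] at hb ⊢; omega
      have hne : k ≠ b := by
        simp only [Finset.mem_Icc] at hb; omega
      exact (Finset.disjoint_left.mp
        (hSdisj k (by simp only [Finset.mem_Icc]; omega) b hb' hne) hj) hjb
    have hset : Finset.univ \ (Finset.Icc 1 k).biUnion S
        = (Finset.univ \ (Finset.Icc 1 (k-1)).biUnion S) \ S k := by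
      rw [hicc, Finset.biUnion_insert]
      ext x
      simp only [Finset.mem_sdiff, Finset.mem_univ, true_and, Finset.mem_union]
      tauto
    rw [hset, Finset.sum_sdiff_eq_sub hSsub]
  -- key: the remaining value before round k is at least (n+1-k)/n
  have key : ∀ k, 1 ≤ k → k ≤ n →
      ((n:ℝ) + 1 - k)/n ≤ ∑ g ∈ Finset.univ \ (Finset.Icc 1 (k-1)).biUnion S, v i g := by
    intro k hk1
    induction k, hk1 using Nat.le_induction with
    | base =>
      intro _
      have h0 : Finset.Icc 1 0 = (∅ : Finset ℕ) := by decide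
      rw [show (1:ℕ) - 1 = 0 from rfl, h0]
      simp only [Finset.biUnion_empty, Finset.sdiff_empty, hnorm]
      rw [show ((n:ℝ) + 1 - (1:ℕ)) = (n:ℝ) by push_cast; ring, div_self hnR.ne']
    | succ k hk1 ih =>
      intro hkn
      have hkn' : k ≤ n := by omega
      have ihk := ih hkn'
      have hAk := hA k (by simp only [Finset.mem_Icc]; omega)
      have hs := hsub k hk1 hkn'
      set a := ∑ g ∈ Finset.univ \ (Finset.Icc 1 (k-1)).biUnion S, v i g with ha
      set s := ∑ g ∈ S k, v i g with hsk
      set c := (n:ℝ) + 1 - k with hc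
      have hc2 : (2:ℝ) ≤ c := by
        have : (k:ℝ) + 1 ≤ n := by exact_mod_cast hkn
        rw [hc]; linarith
      have hc0 : (0:ℝ) < c := by linarith
      have h1 : a - (1/c) * a ≤ a - s := by linarith
      have h2 : a - (1/c)*a = a * ((c-1)/c) := by field_simp
      have h3 : (c/n) * ((c-1)/c) ≤ a * ((c-1)/c) := by
        exact mul_le_mul_of_nonneg_right ihk
          (div_nonneg (by linarith) (by linarith))
      have h4 : (c/n) * ((c-1)/c) = (c-1)/n := by field_simp
      rw [show (k+1) - 1 = k from rfl, hs]
      have : ((n:ℝ) + 1 - ((k:ℕ)+1:ℕ))/n = (c-1)/n := by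
        rw [hc]; push_cast; ring_nf
      rw [this]
      linarith
  -- set up at k = ℓ
  set c := (n:ℝ) + 1 - ℓ with hcdef
  have hc1 : (1:ℝ) ≤ c := by
    have : (ℓ:ℝ) ≤ n := by exact_mod_cast hℓn
    rw [hcdef]; linarith
  have hc0 : (0:ℝ) < c := by linarith
  have hkey := key ℓ hℓ1 hℓn
  set r := ∑ g ∈ Finset.univ \ (Finset.Icc 1 (ℓ-1)).biUnion S, v i g with hrdef
  set s := ∑ g ∈ S ℓ, v i g with hsdef
  have hineq : (1/n : ℝ) ≤ (1/c) * r := by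
    have : (1/c) * (c/n) ≤ (1/c) * r := by
      apply mul_le_mul_of_nonneg_left hkey; positivity
    have he : (1/c) * (c/n) = 1/n := by field_simp
    linarith
  rw [hXi, ← hsdef]
  by_cases hne : (Finset.univ \ (Finset.Icc 1 ℓ).biUnion S).Nonempty
  · obtain ⟨j, hj⟩ := hne
    have hjX : ∃ i', j ∈ X i' := by
      have : j ∈ Finset.univ.biUnion X := by rw [hXcover]; exact Finset.mem_univ j
      simpa using this
    obtain ⟨i', hji'⟩ := hjX
    have hjnot : j ∉ (Finset.Icc 1 ℓ).biUnion S := (Finset.mem_sdiff.mp hj).2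
    have hjSℓ : j ∉ S ℓ := by
      intro h
      exact hjnot (Finset.mem_biUnion.mpr ⟨ℓ, by simp only [Finset.mem_Icc]; omega, h⟩)
    have hi'ne : i' ≠ i := by
      intro h; rw [h, hXi] at hji'; exact hjSℓ hji'
    -- j is in the "right" goods
    have hjright : j ∈ (Finset.Icc (ℓ+1) n).biUnion S := by
      have : j ∈ (Finset.Icc 1 n).biUnion S := by
        rw [hScover]; exact Finset.mem_univ j
      obtain ⟨b, hb, hjb⟩ := Finset.mem_biUnion.mp this
      have hbℓ : ¬ b ≤ ℓ := by
        intro hble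
        exact hjnot (Finset.mem_biUnion.mpr ⟨b,
          by simp only [Finset.mem_Icc] at hb ⊢; omega, hjb⟩)
      exact Finset.mem_biUnion.mpr ⟨b,
        by simp only [Finset.mem_Icc] at hb ⊢; omega, hjb⟩
    -- the whole bundle X i' consists of "right" goods
    have hXsub : X i' ⊆ Finset.univ \ (Finset.Icc 1 ℓ).biUnion S := by
      intro g hg
      rw [Finset.mem_sdiff]
      refine ⟨Finset.mem_univ g, ?_⟩
      intro hgin
      obtain ⟨b, hb, hgb⟩ := Finset.mem_biUnion.mp hgin
      simp only [Finset.mem_Icc] at hb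
      rcases eq_or_ne b ℓ with hbe | hbne
      · subst hbe
        have := Finset.disjoint_left.mp (hXdisj i' i hi'ne) hg
        rw [hXi] at this; exact this hgb
      · have hbl : b ≤ ℓ - 1 := by omega
        apply hnomix i' hi'ne
        constructor
        · exact ⟨g, Finset.mem_inter.mpr ⟨hg, Finset.mem_biUnion.mpr
            ⟨b, by simp only [Finset.mem_Icc]; omega, hgb⟩⟩⟩
        · exact ⟨j, Finset.mem_inter.mpr ⟨hji', hjright⟩⟩
    have hXne : (X i').Nonempty := ⟨j, hji'⟩
    -- each good in X i' has value > 1/n - s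
    have hmin : 1/(n:ℝ) - s ≤ minVal (v i) (X i') := by
      unfold minVal
      rw [dif_pos hXne]
      apply Finset.le_inf'
      intro g hg
      have hBg := hB ℓ hℓ g (hXsub hg)
      rw [← hsdef, ← hrdef, ← hcdef] at hBg
      linarith
    have hdge : minVal (v i) (X i') ≤ dval v X i := by
      unfold dval
      exact (Finset.le_fold_max _).mpr (Or.inr ⟨i',
        Finset.mem_erase.mpr ⟨hi'ne, Finset.mem_univ i'⟩, le_rfl⟩)
    linarith
  · -- no remaining goods: s = r ≥ c/n ≥ 1/n
    rw [Finset.not_nonempty_iff_eq_empty] at hne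
    have h0 : (∑ g ∈ Finset.univ \ (Finset.Icc 1 ℓ).biUnion S, v i g) = 0 := by
      rw [hne]; simp
    have hs := hsub ℓ hℓ1 hℓn
    rw [h0, ← hrdef, ← hsdef] at hs
    have hsr : s = r := by linarith
    have : (1:ℝ)/n ≤ c/n := by
      gcongr
    linarith
end

section
/- (Bundle value plus minimum remaining good value.) Let agent i have valuation normalized so v_i(M) = 1, and let S_1, ..., S_n be a partition of M such that for every k ∈ {1, ..., n}: (a) v_i(S_k) ≤ (1/(n+1−k)) · v_i(M \ (S_1 ∪ ... ∪ S_{k−1})), and (b) for every good j ∈ M \ (S_1 ∪ ... ∪ S_k), v_i(S_k) + v_{ij} > (1/(n+1−k)) · v_i(M \ (S_1 ∪ ... ∪ S_{k−1})). Then for every ℓ ∈ {1, ..., n} such that M \ (S_1 ∪ ... ∪ S_ℓ) is nonempty, v_i(S_ℓ) + min_{j ∈ M \ (S_1 ∪ ... ∪ S_ℓ)} v_{ij} ≥ 1/n; and for ℓ = n one has v_i(S_n) ≥ 1/n. -/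
open Finset

/-- Bundle value plus minimum remaining good value: under conditions (a) and
(b) on the divider's partition `S 1, ..., S n` (1-indexed), for every `ℓ` such
that `M \ (S 1 ∪ ⋯ ∪ S ℓ)` is nonempty,
`v(S ℓ) + min_{j ∈ M \ (S 1 ∪ ⋯ ∪ S ℓ)} v j ≥ 1/n`; moreover `v(S n) ≥ 1/n`. -/
theorem divider_bundle_plus_min (n : ℕ) (hn : 1 ≤ n)
    (G : Type*) [Fintype G] [DecidableEq G]
    (v : G → ℝ) (hv : ∀ j, 0 ≤ v j)
    (hnorm : ∑ j, v j = 1)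
    (S : ℕ → Finset G)
    -- `S 1, ..., S n` is a partition of the goods
    (hSdisj : ∀ b ∈ Finset.Icc 1 n, ∀ b' ∈ Finset.Icc 1 n, b ≠ b' →
      Disjoint (S b) (S b'))
    (hScover : (Finset.Icc 1 n).biUnion S = Finset.univ)
    -- condition (a)
    (hA : ∀ k ∈ Finset.Icc 1 n,
      (∑ g ∈ S k, v g) ≤
        (1 / ((n : ℝ) + 1 - k)) *
          ∑ g ∈ Finset.univ \ (Finset.Icc 1 (k - 1)).biUnion S, v g)
    -- condition (b)
    (hB : ∀ k ∈ Finset.Icc 1 n, ∀ j ∈ Finset.univ \ (Finset.Icc 1 k).biUnion S,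
      (∑ g ∈ S k, v g) + v j >
        (1 / ((n : ℝ) + 1 - k)) *
          ∑ g ∈ Finset.univ \ (Finset.Icc 1 (k - 1)).biUnion S, v g) :
    (∀ ℓ ∈ Finset.Icc 1 n, (Finset.univ \ (Finset.Icc 1 ℓ).biUnion S).Nonempty →
      (∑ g ∈ S ℓ, v g) + minVal v (Finset.univ \ (Finset.Icc 1 ℓ).biUnion S) ≥ 1 / n) ∧
    (∑ g ∈ S n, v g) ≥ 1 / n := by
  set R : ℕ → Finset G := fun k => Finset.univ \ (Finset.Icc 1 k).biUnion S with hR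
  set r : ℕ → ℝ := fun k => ∑ g ∈ R k, v g with hr
  have hnpos : (0:ℝ) < n := by exact_mod_cast hn
  -- step decomposition : R (k+1) = R k \ S (k+1)
  have hstep : ∀ k : ℕ, R (k+1) = R k \ S (k+1) := by
    intro k
    have : Finset.Icc 1 (k+1) = insert (k+1) (Finset.Icc 1 k) := by
      ext x; simp [Finset.mem_Icc, Nat.lt_succ_iff]
      omega
    simp [hR, this, Finset.biUnion_insert, Finset.sdiff_union_distrib,
      Finset.sdiff_sdiff_left']
    rw [Finset.inter_comm]
  have hrstep : ∀ k : ℕ, r k - (∑ g ∈ S (k+1), v g) ≤ r (k+1) := by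
    intro k
    have h1 : ∑ g ∈ R k ∩ S (k+1), v g + ∑ g ∈ R k \ S (k+1), v g = r k :=
      Finset.sum_inter_add_sum_sdiff _ _ _
    have h2 : ∑ g ∈ R k ∩ S (k+1), v g ≤ ∑ g ∈ S (k+1), v g :=
      Finset.sum_le_sum_of_subset_of_nonneg (Finset.inter_subset_right)
        (fun i _ _ => hv i)
    have := hstep k
    simp only [hr]
    rw [this]
    linarith
  -- key lemma
  have key : ∀ k : ℕ, k ≤ n → ((n:ℝ) - k)/n ≤ r k := by
    intro k
    induction k with
    | zero =>
      intro _
      have : R 0 = Finset.univ := by simp [hR]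
      simp [hr, this, hnorm, div_le_one hnpos]
    | succ k ih =>
      intro hk
      have hk' : k ≤ n := by omega
      have hprev := ih hk'
      have hden : (0:ℝ) < (n:ℝ) - k := by
        have : (k:ℝ) + 1 ≤ n := by exact_mod_cast hk
        linarith
      have hAk := hA (k+1) (by simp [Finset.mem_Icc]; omega)
      have hcast : ((n:ℝ) + 1 - ((k+1:ℕ):ℝ)) = (n:ℝ) - k := by push_cast; ring
      rw [Nat.add_sub_cancel] at hAk
      rw [hcast] at hAk
      have hSk : (∑ g ∈ S (k+1), v g) ≤ (1 / ((n:ℝ) - k)) * r k := hAk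
      have hSk' : (∑ g ∈ S (k+1), v g) ≤ r k / ((n:ℝ) - k) := by
        rw [div_eq_mul_inv, mul_comm]; simpa [one_div] using hSk
      have h3 := hrstep k
      have hSk2 := hSk'
      have hfinal : ((n:ℝ) - (k+1))/n ≤ r k - r k / ((n:ℝ) - k) := by
        have hrk : r k * (((n:ℝ) - k - 1)/((n:ℝ) - k)) ≥
            (((n:ℝ) - k)/n) * (((n:ℝ) - k - 1)/((n:ℝ) - k)) := by
          apply mul_le_mul_of_nonneg_right hprev
          apply div_nonneg _ (le_of_lt hden)
          have : ((k:ℝ)) + 1 ≤ n := by exact_mod_cast hk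
          linarith
        have e1 : r k * (((n:ℝ) - k - 1)/((n:ℝ) - k)) = r k - r k / ((n:ℝ) - k) := by
          field_simp
        have e2 : (((n:ℝ) - k)/n) * (((n:ℝ) - k - 1)/((n:ℝ) - k)) = ((n:ℝ) - k - 1)/n := by
          field_simp
        rw [e1, e2] at hrk
        have e3 : ((n:ℝ) - ((k:ℝ)+1))/n = ((n:ℝ) - k - 1)/n := by ring
        push_cast
        rw [e3]
        linarith
      push_cast at hfinal ⊢
      linarith
  constructor
  · intro ℓ hℓ hne
    rw [Finset.mem_Icc] at hℓ
    obtain ⟨j, hj, hjmin⟩ := Finset.exists_mem_eq_inf' hne v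
    have hBj := hB ℓ (by simp [Finset.mem_Icc]; omega) j hj
    have hcast : ((n:ℝ) + 1 - (ℓ:ℝ)) = (n:ℝ) - ((ℓ - 1 : ℕ):ℝ) := by
      have : ((ℓ - 1 : ℕ):ℝ) = (ℓ:ℝ) - 1 := by
        push_cast [Nat.cast_sub hℓ.1]; ring
      rw [this]; ring
    have hden : (0:ℝ) < (n:ℝ) - ((ℓ - 1 : ℕ):ℝ) := by
      have h1 : ((ℓ - 1 : ℕ):ℝ) = (ℓ:ℝ) - 1 := by push_cast [Nat.cast_sub hℓ.1]; ring
      have h2 : (ℓ:ℝ) ≤ n := by exact_mod_cast hℓ.2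
      rw [h1]; linarith
    have hkey := key (ℓ - 1) (by omega)
    have hineq : 1/(n:ℝ) ≤ (1 / ((n:ℝ) - ((ℓ-1:ℕ):ℝ))) * r (ℓ-1) := by
      rw [one_div ((n:ℝ) - ((ℓ-1:ℕ):ℝ)), inv_mul_eq_div, le_div_iff₀ hden]
      have h4 : 1/(n:ℝ) * ((n:ℝ) - ((ℓ-1:ℕ):ℝ)) = ((n:ℝ) - ((ℓ-1:ℕ):ℝ))/n := by ring
      rw [h4]; exact hkey
    have : (1 / ((n : ℝ) + 1 - ℓ)) *
        ∑ g ∈ Finset.univ \ (Finset.Icc 1 (ℓ - 1)).biUnion S, v g ≥ 1/n := by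
      rw [hcast]
      exact hineq
    have hmv : minVal v (Finset.univ \ (Finset.Icc 1 ℓ).biUnion S) = v j := by
      rw [minVal, dif_pos hne, hjmin]
    rw [hmv]
    have : (∑ g ∈ S ℓ, v g) + v j > 1/n := lt_of_le_of_lt this hBj
    linarith
  · -- v(S n) ≥ 1/n
    have hRn : R n = ∅ := by simp [hR, hScover]
    have hrn : r n = 0 := by simp [hr, hRn]
    have hkey := key (n-1) (by omega)
    have hstepn := hrstep (n-1)
    have hn1 : n - 1 + 1 = n := by omega
    rw [hn1] at hstepn
    have hc : ((n:ℝ) - ((n-1:ℕ):ℝ)) = 1 := by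
      push_cast [Nat.cast_sub hn]; ring
    rw [hc] at hkey
    rw [hrn] at hstepn
    linarith
end

section
/- (Combining local PROPm solutions in a proportional decomposition.) Fix n agents with valuations normalized so v_i(M) = 1. Let the agent set N be partitioned into nonempty sets N_1, ..., N_r and the good set M be partitioned into sets M_1, ..., M_r, and let X be an allocation that assigns the goods of M_j only to agents of N_j for every j. Suppose that for every j and every agent i ∈ N_j: (a) v_i(M_j)/|N_j| ≥ 1/n (the decomposition is proportional), and (b) v_i(X_i) + max_{i' ∈ N_j, i' ≠ i} m_i(X_{i'}) ≥ v_i(M_j)/|N_j| (agent i is locally PROPm-satisfied within its sub-problem). Then X is a PROPm allocation of the full instance: every agent i satisfies v_i(X_i) + d_i(X) ≥ 1/n. -/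
open Finset

/-- Combining local PROPm solutions in a proportional decomposition yields a
PROPm allocation of the full instance. -/
theorem combine_local_propm (n : ℕ)
    (G : Type*) [Fintype G] [DecidableEq G]
    (v : Fin n → G → ℝ) (hv : ∀ i j, 0 ≤ v i j)
    (hnorm : ∀ i, ∑ j, v i j = 1)
    (r : ℕ)
    (Nsets : Fin r → Finset (Fin n)) (Msets : Fin r → Finset G)
    -- the agent sets are nonempty and partition the agents
    (hNne : ∀ j, (Nsets j).Nonempty)
    (hNdisj : ∀ j j', j ≠ j' → Disjoint (Nsets j) (Nsets j'))
    (hNcover : Finset.univ.biUnion Nsets = Finset.univ)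
    -- the good sets partition the goods
    (hMdisj : ∀ j j', j ≠ j' → Disjoint (Msets j) (Msets j'))
    (hMcover : Finset.univ.biUnion Msets = Finset.univ)
    -- `X` is an allocation assigning the goods of `Msets j` only to agents of `Nsets j`
    (X : Fin n → Finset G)
    (hXdisj : ∀ k k', k ≠ k' → Disjoint (X k) (X k'))
    (hXcover : Finset.univ.biUnion X = Finset.univ)
    (hXsub : ∀ j, ∀ i ∈ Nsets j, X i ⊆ Msets j)
    -- (a) the decomposition is proportional
    (hprop : ∀ j, ∀ i ∈ Nsets j,
      (∑ g ∈ Msets j, v i g) / (Nsets j).card ≥ 1 / n)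
    -- (b) every agent is locally PROPm-satisfied within its sub-problem
    (hlocal : ∀ j, ∀ i ∈ Nsets j,
      (∑ g ∈ X i, v i g) + dvalOn v X (Nsets j) i ≥
        (∑ g ∈ Msets j, v i g) / (Nsets j).card) :
    ∀ i, (∑ g ∈ X i, v i g) + dval v X i ≥ 1 / n := by

  intro i
  have hi : i ∈ Finset.univ.biUnion Nsets := by rw [hNcover]; exact Finset.mem_univ i
  obtain ⟨j, -, hij⟩ := Finset.mem_biUnion.1 hi
  have hd : dvalOn v X (Nsets j) i ≤ dval v X i := by
    rw [dvalOn, Finset.fold_max_le]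
    constructor
    · rw [dval, Finset.le_fold_max]; exact Or.inl le_rfl
    · intro x hx
      rw [dval, Finset.le_fold_max]
      refine Or.inr ⟨x, ?_, le_rfl⟩
      rw [Finset.mem_erase] at hx ⊢
      exact ⟨hx.1, Finset.mem_univ x⟩
  have h1 := hprop j i hij
  have h2 := hlocal j i hij
  linarith
end
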